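/- Let B₄ be the presented group on generators σ₁, σ₂, σ₃ with the braid relations, and let ψ : B₄ → GL(3, ℤ[t,t⁻¹]) be a homomorphism with ψ(σᵢ) = Mᵢ. Assume ker ψ is contained in the subgroup generated by α = σ₁σ₂σ₃⁻¹σ₁σ₂⁻¹σ₁⁻¹ and β = σ₃σ₁⁻¹. Then ψ is injective if and only if for every m ∈ ℤ, every k ≥ 0, and every choice of exponents i₁, …, i_k ∈ {1, 2, 3} for which the braid word w = θ^m · τ² · (Δτ^{i₁})⋯(Δτ^{i_k}) · Δ · τ² is a non-identity element of B₄, the matrix ψ(w) = t^{4m} · ψ(τ)² ψ(Δ) ψ(τ)^{i₁} ψ(Δ) ⋯ ψ(τ)^{i_k} ψ(Δ) ψ(τ)² is not the identity matrix. -/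

import Mathlib

/-!
In `B₄` one has `Δ² = τ⁴`, `α = τ³Δ⁻¹τ⁻¹` and `β = Δ⁻¹τ²`, so `ker ψ ≤ ⟨τ, Δ⟩`. Since `τ⁴ = Δ²`
commutes with `τ` and `Δ`, every element of `⟨τ, Δ⟩` is `τ^a (Δτ^{i₁}) ⋯ (Δτ^{iₖ}) Δ^e` with
`iⱼ ∈ {1, 2, 3}` and `e ∈ {0, 1}`. Up to conjugacy this is a power of `τ` or a word
`θ^m τ² (Δτ^{i₁}) ⋯ (Δτ^{iₖ}) Δ τ²`, the latter after splitting the last exponent of `τ` as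
`a + b + 4m + 8` with `a, b ∈ {1, 2, 3}`. Conjugates lie in `ker ψ` together, and `ψ(τ) = M₁M₂M₃`
has infinite order: `ψ(τ)⁴ = t⁴ I`, while `ψ(τ)`, `ψ(τ)²` and `ψ(τ)³` have a zero diagonal entry.
-/

open LaurentPolynomial

/-- The braid relators of `B₄` in the free group on three generators. -/
def braidRels : Set (FreeGroup (Fin 3)) :=
  { FreeGroup.of 0 * FreeGroup.of 1 * FreeGroup.of 0 *
      (FreeGroup.of 1 * FreeGroup.of 0 * FreeGroup.of 1)⁻¹,
    FreeGroup.of 1 * FreeGroup.of 2 * FreeGroup.of 1 *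
      (FreeGroup.of 2 * FreeGroup.of 1 * FreeGroup.of 2)⁻¹,
    FreeGroup.of 0 * FreeGroup.of 2 * (FreeGroup.of 2 * FreeGroup.of 0)⁻¹ }

/-- The braid group `B₄`, presented on `σ₁, σ₂, σ₃` with the braid relations. -/
abbrev B₄ : Type := PresentedGroup braidRels

/-- The standard generators `σ₁, σ₂, σ₃` of `B₄` (indexed by `Fin 3`). -/
def σ (i : Fin 3) : B₄ := PresentedGroup.of i

/-- `t` in the Laurent polynomial ring `ℤ[t,t⁻¹]`. -/
noncomputable def tt : LaurentPolynomial ℤ := T 1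

/-- Reduced Burau matrix of `σ₁`. -/
noncomputable def M₁ : Matrix (Fin 3) (Fin 3) (LaurentPolynomial ℤ) :=
  !![-tt, tt, 0; 0, 1, 0; 0, 0, 1]

/-- Reduced Burau matrix of `σ₂`. -/
noncomputable def M₂ : Matrix (Fin 3) (Fin 3) (LaurentPolynomial ℤ) :=
  !![1, 0, 0; 1, -tt, tt; 0, 0, 1]

/-- Reduced Burau matrix of `σ₃`. -/
noncomputable def M₃ : Matrix (Fin 3) (Fin 3) (LaurentPolynomial ℤ) :=
  !![1, 0, 0; 0, 1, 0; 0, 1, -tt]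

/-- `α = σ₁σ₂σ₃⁻¹σ₁σ₂⁻¹σ₁⁻¹`. -/
def α : B₄ := σ 0 * σ 1 * (σ 2)⁻¹ * σ 0 * (σ 1)⁻¹ * (σ 0)⁻¹

/-- `β = σ₃σ₁⁻¹`. -/
def β : B₄ := σ 2 * (σ 0)⁻¹

/-- `τ = σ₁σ₂σ₃`. -/
def τ : B₄ := σ 0 * σ 1 * σ 2

/-- `Δ = σ₁σ₂σ₃σ₁σ₂σ₁`. -/
def Δ : B₄ := σ 0 * σ 1 * σ 2 * σ 0 * σ 1 * σ 0

/-- `θ = τ⁴`, the full twist generating the center of `B₄`. -/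
def θ : B₄ := τ ^ 4

section TwoGenerator

variable {G : Type*} [Group G] {t d : G}

def dtWord (t d : G) (l : List ℕ) : G := (l.map fun i => d * t ^ i).prod

@[simp] lemma dtWord_nil : dtWord t d [] = 1 := rfl

@[simp] lemma dtWord_cons (i : ℕ) (l : List ℕ) :
    dtWord t d (i :: l) = d * t ^ i * dtWord t d l := by
  simp [dtWord]

@[simp] lemma dtWord_append (l₁ l₂ : List ℕ) :
    dtWord t d (l₁ ++ l₂) = dtWord t d l₁ * dtWord t d l₂ := by
  simp [dtWord]

instance : Trans (@IsConj G _) (@IsConj G _) (@IsConj G _) := ⟨IsConj.trans⟩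

lemma MonoidHom.map_dtWord {M : Type*} [Monoid M] (f : G →* M) (l : List ℕ) :
    f (dtWord t d l) = (l.map fun i => f d * f t ^ i).prod := by
  simp [dtWord, map_list_prod, Function.comp_def]

lemma isConj_mul_swap (x y : G) : IsConj (x * y) (y * x) :=
  isConj_iff.2 ⟨y, by group⟩

lemma commute_zpow_four_mul (hd : d ^ 2 = t ^ 4) (k : ℤ) : Commute (t ^ (4 * k)) d := by
  rw [zpow_mul, zpow_ofNat, ← hd]
  exact ((Commute.self_pow d 2).symm.zpow_left k)

lemma inv_eq_zpow_neg_four_mul (hd : d ^ 2 = t ^ 4) : d⁻¹ = t ^ (-4 : ℤ) * d := by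
  rw [zpow_neg, zpow_ofNat, ← hd, pow_two, mul_inv_rev, inv_mul_cancel_right]

def HasNormalForm (t d g : G) : Prop :=
  ∃ (a : ℤ) (l : List ℕ) (e : Bool), (∀ i ∈ l, i = 1 ∨ i = 2 ∨ i = 3) ∧
    g = t ^ a * dtWord t d l * (bif e then d else 1)

lemma hasNormalForm_one : HasNormalForm t d 1 :=
  ⟨0, [], false, by simp, by simp⟩

lemma HasNormalForm.zpow_mul {g : G} (h : HasNormalForm t d g) (n : ℤ) :
    HasNormalForm t d (t ^ n * g) := by
  obtain ⟨a, l, e, hl, rfl⟩ := h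
  exact ⟨n + a, l, e, hl, by simp only [zpow_add, mul_assoc]⟩

lemma hasNormalForm_mul_pow_mul_dtWord (hd : d ^ 2 = t ^ 4) {r : ℕ} (hr : r < 4) {l : List ℕ}
    (hl : ∀ i ∈ l, i = 1 ∨ i = 2 ∨ i = 3) (e : Bool) :
    HasNormalForm t d (d * t ^ r * dtWord t d l * (bif e then d else 1)) := by
  interval_cases r
  · rcases l with _ | ⟨i, l⟩
    · cases e
      · exact ⟨0, [], true, hl, by simp⟩
      · exact ⟨4, [], false, hl, by simp [← hd, pow_two]⟩
    · refine ⟨4 + i, l, e, fun j hj => hl j (List.mem_cons_of_mem i hj), ?_⟩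
      simp [zpow_add, ← hd, pow_two, mul_assoc]
  · exact ⟨0, 1 :: l, e, by simpa using hl, by simp [mul_assoc]⟩
  · exact ⟨0, 2 :: l, e, by simpa using hl, by simp [mul_assoc]⟩
  · exact ⟨0, 3 :: l, e, by simpa using hl, by simp [mul_assoc]⟩

lemma HasNormalForm.d_mul (hd : d ^ 2 = t ^ 4) {g : G} (h : HasNormalForm t d g) :
    HasNormalForm t d (d * g) := by
  obtain ⟨a, l, e, hl, rfl⟩ := h
  obtain ⟨r, hr⟩ := Int.eq_ofNat_of_zero_le (Int.emod_nonneg a four_ne_zero)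
  have hr4 : r < 4 := by have := Int.emod_lt_of_pos a four_pos; omega
  have ha : d * t ^ a = t ^ (4 * (a / 4)) * (d * t ^ r) :=
    calc d * t ^ a = d * t ^ (4 * (a / 4)) * t ^ (r : ℤ) := by
          rw [mul_assoc, ← zpow_add, ← hr, Int.mul_ediv_add_emod]
      _ = t ^ (4 * (a / 4)) * (d * t ^ r) := by
          rw [← (commute_zpow_four_mul hd _).eq, mul_assoc, zpow_natCast]
  have := (hasNormalForm_mul_pow_mul_dtWord hd hr4 hl e).zpow_mul (4 * (a / 4))
  simpa only [← mul_assoc, ha] using this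

lemma hasNormalForm_of_mem_closure (hd : d ^ 2 = t ^ 4) {g : G}
    (hg : g ∈ Subgroup.closure {t, d}) : HasNormalForm t d g := by
  induction hg using Subgroup.closure_induction_left with
  | one => exact hasNormalForm_one
  | mul_left x hx y _ ih =>
    rcases hx with rfl | rfl
    · simpa using ih.zpow_mul 1
    · exact ih.d_mul hd
  | inv_mul_cancel x hx y _ ih =>
    rcases hx with rfl | rfl
    · simpa using ih.zpow_mul (-1)
    · rw [inv_eq_zpow_neg_four_mul hd, mul_assoc]
      exact (ih.d_mul hd).zpow_mul _

-- Rotate cyclically, moving `d` past `t⁴ = d²` to merge the two `d`s around `t^(4m+4)`.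
lemma isConj_dtWord_mul_zpow (hd : d ^ 2 = t ^ 4) (l : List ℕ) (a b : ℕ) (m : ℤ) :
    IsConj (dtWord t d l * d * t ^ ((a + b : ℤ) + 4 * m + 8))
      ((t ^ 4) ^ m * t ^ 2 * dtWord t d (b :: l ++ [a]) * d * t ^ 2) := by
  have hdd : d * d = t ^ (4 : ℤ) := by rw [← pow_two, hd, zpow_ofNat]
  have hcomm := (commute_zpow_four_mul hd (m + 1)).eq
  symm
  calc (t ^ 4) ^ m * t ^ 2 * dtWord t d (b :: l ++ [a]) * d * t ^ 2
      = (t ^ (4 * m + 2) * d * t ^ b * dtWord t d l * d * t ^ a * d) * t ^ 2 := by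
        simp only [dtWord_append, dtWord_cons, dtWord_nil, mul_one, zpow_add, zpow_mul,
          zpow_ofNat, mul_assoc]
    IsConj _ (t ^ 2 * (t ^ (4 * m + 2) * d * t ^ b * dtWord t d l * d * t ^ a * d)) :=
        isConj_mul_swap _ _
    _ = (t ^ (4 * (m + 1)) * d * t ^ b * dtWord t d l * d * t ^ a) * d := by
        rw [show t ^ (4 * (m + 1)) = t ^ 2 * t ^ (4 * m + 2) by
          rw [← zpow_natCast, ← zpow_add]; ring_nf]
        simp only [mul_assoc]
    IsConj _ (d * (t ^ (4 * (m + 1)) * d * t ^ b * dtWord t d l * d * t ^ a)) :=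
        isConj_mul_swap _ _
    _ = t ^ (4 * m + 8 + b) * (dtWord t d l * d * t ^ a) := by
        rw [show t ^ (4 * m + 8 + b) = t ^ (4 * (m + 1)) * (d * d) * t ^ b by
          rw [hdd, ← zpow_natCast, ← zpow_add, ← zpow_add]; ring_nf]
        simp only [← mul_assoc, ← hcomm]
    IsConj _ (dtWord t d l * d * t ^ a * t ^ (4 * m + 8 + b)) := isConj_mul_swap _ _
    _ = dtWord t d l * d * t ^ ((a + b : ℤ) + 4 * m + 8) := by
        rw [mul_assoc _ (t ^ a), ← zpow_natCast, ← zpow_add]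
        ring_nf

lemma exists_eq_add_add_four_mul (c : ℤ) :
    ∃ a b : ℕ, (a = 1 ∨ a = 2 ∨ a = 3) ∧ (b = 1 ∨ b = 2 ∨ b = 3) ∧
      ∃ m : ℤ, c = (a + b : ℤ) + 4 * m + 8 := by
  rcases (by omega : c % 4 = 0 ∨ c % 4 = 1 ∨ c % 4 = 2 ∨ c % 4 = 3) with h | h | h | h
  · exact ⟨1, 3, by omega, by omega, c / 4 - 3, by omega⟩
  · exact ⟨2, 3, by omega, by omega, c / 4 - 3, by omega⟩
  · exact ⟨1, 1, by omega, by omega, c / 4 - 2, by omega⟩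
  · exact ⟨1, 2, by omega, by omega, c / 4 - 2, by omega⟩

lemma exists_isConj_dtWord_mul_mul_zpow (hd : d ^ 2 = t ^ 4) {l : List ℕ}
    (hl : ∀ i ∈ l, i = 1 ∨ i = 2 ∨ i = 3) (c : ℤ) :
    ∃ (m : ℤ) (L : List ℕ), (∀ i ∈ L, i = 1 ∨ i = 2 ∨ i = 3) ∧
      IsConj (dtWord t d l * d * t ^ c) ((t ^ 4) ^ m * t ^ 2 * dtWord t d L * d * t ^ 2) := by
  obtain ⟨a, b, ha, hb, m, rfl⟩ := exists_eq_add_add_four_mul c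
  refine ⟨m, b :: l ++ [a], ?_, isConj_dtWord_mul_zpow hd l a b m⟩
  intro i hi
  rcases List.mem_append.1 hi with hi | hi
  · rcases List.mem_cons.1 hi with rfl | hi
    exacts [hb, hl i hi]
  · rwa [List.mem_singleton.1 hi]

theorem HasNormalForm.exists_eq_zpow_or_isConj (hd : d ^ 2 = t ^ 4) {g : G}
    (h : HasNormalForm t d g) :
    (∃ n : ℤ, g = t ^ n) ∨ ∃ (m : ℤ) (L : List ℕ), (∀ i ∈ L, i = 1 ∨ i = 2 ∨ i = 3) ∧
      IsConj g ((t ^ 4) ^ m * t ^ 2 * dtWord t d L * d * t ^ 2) := by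
  obtain ⟨a, l, e, hl, rfl⟩ := h
  cases e
  · rcases l.eq_nil_or_concat with rfl | ⟨l, i, rfl⟩
    · exact .inl ⟨a, by simp⟩
    · simp only [List.concat_eq_append, List.forall_mem_append] at hl ⊢
      obtain ⟨m, L, hL, hconj⟩ := exists_isConj_dtWord_mul_mul_zpow hd hl.1 (i + a)
      refine .inr ⟨m, L, hL, ?_⟩
      have hg : t ^ a * dtWord t d (l ++ [i]) * (bif false then d else 1) =
          t ^ a * (dtWord t d l * d * t ^ i) := by
        simp [mul_assoc]
      rw [hg]
      refine (isConj_mul_swap _ _).trans ?_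
      rwa [mul_assoc, ← zpow_natCast, ← zpow_add]
  · obtain ⟨m, L, hL, hconj⟩ := exists_isConj_dtWord_mul_mul_zpow hd hl a
    refine .inr ⟨m, L, hL, ?_⟩
    rw [cond_true, mul_assoc]
    exact (isConj_mul_swap _ _).trans hconj

end TwoGenerator

lemma σ_braid₀₁ : σ 0 * σ 1 * σ 0 = σ 1 * σ 0 * σ 1 :=
  PresentedGroup.mk_eq_mk_of_mul_inv_mem (Set.mem_insert _ _)

lemma σ_braid₁₂ : σ 1 * σ 2 * σ 1 = σ 2 * σ 1 * σ 2 :=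
  PresentedGroup.mk_eq_mk_of_mul_inv_mem (Set.mem_insert_of_mem _ (Set.mem_insert _ _))

lemma σ_comm₀₂ : σ 0 * σ 2 = σ 2 * σ 0 :=
  PresentedGroup.mk_eq_mk_of_mul_inv_mem (by simp [braidRels])

lemma τ_mul_σ₀ : τ * σ 0 = σ 1 * τ :=
  calc τ * σ 0 = σ 0 * σ 1 * (σ 2 * σ 0) := by simp only [τ, mul_assoc]
    _ = σ 0 * σ 1 * σ 0 * σ 2 := by rw [← σ_comm₀₂]; simp only [mul_assoc]
    _ = σ 1 * τ := by rw [σ_braid₀₁]; simp only [τ, mul_assoc]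

lemma τ_mul_σ₁ : τ * σ 1 = σ 2 * τ :=
  calc τ * σ 1 = σ 0 * (σ 1 * σ 2 * σ 1) := by simp only [τ, mul_assoc]
    _ = σ 0 * σ 2 * (σ 1 * σ 2) := by rw [σ_braid₁₂]; simp only [mul_assoc]
    _ = σ 2 * τ := by rw [σ_comm₀₂]; simp only [τ, mul_assoc]

lemma τ_mul_σ₀σ₁σ₀ : τ * (σ 0 * σ 1 * σ 0) = σ 1 * σ 2 * σ 1 * τ :=
  calc τ * (σ 0 * σ 1 * σ 0) = σ 1 * (τ * σ 1) * σ 0 := by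
        rw [← mul_assoc, ← mul_assoc, τ_mul_σ₀, mul_assoc (σ 1)]
    _ = σ 1 * σ 2 * (τ * σ 0) := by rw [τ_mul_σ₁]; simp only [mul_assoc]
    _ = σ 1 * σ 2 * σ 1 * τ := by rw [τ_mul_σ₀]; simp only [mul_assoc]

lemma τ_sq : τ ^ 2 = σ 0 * σ 1 * σ 0 * (σ 1 * σ 2 * σ 1) :=
  calc τ ^ 2 = σ 0 * σ 1 * (σ 2 * σ 0) * (σ 1 * σ 2) := by simp only [pow_two, τ, mul_assoc]
    _ = σ 0 * σ 1 * σ 0 * (σ 2 * σ 1 * σ 2) := by rw [← σ_comm₀₂]; simp only [mul_assoc]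
    _ = σ 0 * σ 1 * σ 0 * (σ 1 * σ 2 * σ 1) := by rw [σ_braid₁₂]

lemma Δ_eq : Δ = τ * (σ 0 * σ 1 * σ 0) := by
  simp only [Δ, τ, mul_assoc]

lemma τ_pow_three : τ ^ 3 = σ 0 * σ 1 * σ 0 * Δ := by
  rw [pow_succ, τ_sq, Δ_eq, mul_assoc, ← τ_mul_σ₀σ₁σ₀]

lemma Δ_sq : Δ ^ 2 = τ ^ 4 := by
  rw [pow_succ' τ 3, τ_pow_three, ← mul_assoc, ← Δ_eq, pow_two]

lemma α_eq : α = τ ^ 3 * Δ⁻¹ * τ⁻¹ := by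
  rw [τ_pow_three, mul_inv_cancel_right, eq_mul_inv_iff_mul_eq, α, τ]
  simp only [mul_assoc, inv_mul_cancel_left]
  rw [σ_comm₀₂, inv_mul_cancel_left]

lemma β_eq : β = Δ⁻¹ * τ ^ 2 := by
  rw [eq_inv_mul_iff_mul_eq, β, Δ_eq, pow_two, ← mul_assoc, mul_inv_eq_iff_eq_mul]
  simp only [mul_assoc]
  rw [σ_comm₀₂]
  simp only [τ, mul_assoc]

lemma closure_α_β_le : Subgroup.closure {α, β} ≤ Subgroup.closure {τ, Δ} := by
  have hτ : τ ∈ Subgroup.closure {τ, Δ} := Subgroup.subset_closure (Set.mem_insert _ _)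
  have hΔ : Δ ∈ Subgroup.closure {τ, Δ} :=
    Subgroup.subset_closure (Set.mem_insert_of_mem _ rfl)
  rw [Subgroup.closure_le, Set.insert_subset_iff, Set.singleton_subset_iff, α_eq, β_eq]
  exact ⟨mul_mem (mul_mem (pow_mem hτ 3) (inv_mem hΔ)) (inv_mem hτ),
    mul_mem (inv_mem hΔ) (pow_mem hτ 2)⟩

lemma LaurentPolynomial.T_eq_one_iff {R : Type*} [Semiring R] [Nontrivial R] {n : ℤ} :
    (T n : R[T;T⁻¹]) = 1 ↔ n = 0 := by
  refine ⟨fun h => ?_, fun h => h ▸ T_zero⟩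
  simpa [← T_zero, eq_comm] using congrArg (fun f : R[T;T⁻¹] => f.coeff n) h

lemma Matrix.GeneralLinearGroup.val_zpow_eq_T_smul {ι R : Type*} [Fintype ι] [DecidableEq ι]
    [CommRing R] {u : GL ι R[T;T⁻¹]} {k : ℤ}
    (hu : (u : Matrix ι ι R[T;T⁻¹]) = (T k : R[T;T⁻¹]) • 1) (m : ℤ) :
    ((u ^ m : GL ι R[T;T⁻¹]) : Matrix ι ι R[T;T⁻¹]) = (T (k * m) : R[T;T⁻¹]) • 1 := by
  have hinv : ((u⁻¹ : GL ι R[T;T⁻¹]) : Matrix ι ι R[T;T⁻¹]) = (T (-k) : R[T;T⁻¹]) • 1 :=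
    Units.inv_eq_of_mul_eq_one_right (by rw [hu, smul_mul_smul_comm, one_mul, ← T_add]; simp)
  induction m using Int.induction_on with
  | zero => simp
  | succ m ih =>
    rw [_root_.zpow_add_one, Units.val_mul, ih, hu, smul_mul_smul_comm, one_mul, ← T_add,
      mul_add_one]
  | pred m ih =>
    rw [_root_.zpow_sub_one, Units.val_mul, ih, hinv, smul_mul_smul_comm, one_mul, ← T_add,
      mul_sub_one, sub_eq_add_neg]

local notation "𝕄" => Matrix (Fin 3) (Fin 3) (LaurentPolynomial ℤ)

noncomputable def burauTau : 𝕄 :=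
  !![0, 0, -tt ^ 3; 1, 0, -tt ^ 2; 0, 1, -tt]

lemma M₁_mul_M₂_mul_M₃ : M₁ * M₂ * M₃ = burauTau := by
  refine Matrix.ext fun i j => ?_
  fin_cases i <;> fin_cases j <;>
    simp [M₁, M₂, M₃, burauTau, Matrix.mul_apply, Fin.sum_univ_three] <;> ring

-- `burauTau` is the companion matrix of `X³ + tX² + t²X + t³`, which divides `X⁴ - t⁴`.
lemma burauTau_pow_four : burauTau ^ 4 = (T 4 : LaurentPolynomial ℤ) • 1 := by
  have : (T 4 : LaurentPolynomial ℤ) = tt ^ 4 := by simp [tt, T_pow]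
  refine Matrix.ext fun i j => ?_
  fin_cases i <;> fin_cases j <;>
    simp [this, burauTau, pow_succ, Matrix.mul_apply, Fin.sum_univ_three] <;> ring

lemma exists_burauTau_pow_apply_self_eq_zero {r : ℕ} (h0 : 0 < r) (h4 : r < 4) :
    ∃ i, (burauTau ^ r) i i = 0 := by
  interval_cases r
  · exact ⟨0, by simp [burauTau]⟩
  · exact ⟨0, by simp [burauTau, pow_two, Matrix.mul_apply, Fin.sum_univ_three]⟩
  · exact ⟨1, by simp [burauTau, pow_succ, Matrix.mul_apply, Fin.sum_univ_three]⟩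

lemma zpow_eq_one_iff_of_val_eq_burauTau {u : GL (Fin 3) (LaurentPolynomial ℤ)}
    (hu : (u : 𝕄) = burauTau) {n : ℤ} :
    u ^ n = 1 ↔ n = 0 := by
  refine ⟨fun h => ?_, fun h => h ▸ zpow_zero u⟩
  obtain ⟨r, hr⟩ := Int.eq_ofNat_of_zero_le (Int.emod_nonneg n four_ne_zero)
  have hr4 : r < 4 := by have := Int.emod_lt_of_pos n four_pos; omega
  have hsplit : u ^ n = (u ^ 4) ^ (n / 4) * u ^ r := by
    rw [← zpow_natCast, ← zpow_natCast, ← zpow_mul, ← zpow_add, ← hr]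
    push_cast
    rw [Int.mul_ediv_add_emod]
  have hmat : (T (4 * (n / 4)) : LaurentPolynomial ℤ) • burauTau ^ r = 1 := by
    have h4 : ((u ^ 4 : GL (Fin 3) (LaurentPolynomial ℤ)) : 𝕄) =
        (T 4 : LaurentPolynomial ℤ) • 1 := by
      rw [Units.val_pow_eq_pow_val, hu, burauTau_pow_four]
    have := congrArg (fun v : GL (Fin 3) (LaurentPolynomial ℤ) => (v : 𝕄)) h
    simpa [hsplit, Matrix.GeneralLinearGroup.val_zpow_eq_T_smul h4, hu] using this
  rcases Nat.eq_zero_or_pos r with rfl | hr0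
  · have := congrFun (congrFun hmat 0) 0
    simp [T_eq_one_iff] at this
    omega
  · obtain ⟨i, hi⟩ := exists_burauTau_pow_apply_self_eq_zero hr0 hr4
    simpa [hi] using congrFun (congrFun hmat i) i

/-- The Burau representation of `B₄` is faithful if and only if, for every `m ∈ ℤ`
and every word `θ^m τ² Δτ^{i₁} ⋯ Δτ^{i_k} Δ τ²` (with `i₁, …, i_k ∈ {1,2,3}`)
which is a non-identity element of `B₄`, the corresponding matrix
`t^{4m} · ψ(τ)² ψ(Δ) ψ(τ)^{i₁} ψ(Δ) ⋯ ψ(τ)^{i_k} ψ(Δ) ψ(τ)²` is not the identity. -/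
theorem burau_faithful_iff
    (ψ : B₄ →* Matrix.GeneralLinearGroup (Fin 3) (LaurentPolynomial ℤ))
    (h₁ : (ψ (σ 0) : Matrix (Fin 3) (Fin 3) (LaurentPolynomial ℤ)) = M₁)
    (h₂ : (ψ (σ 1) : Matrix (Fin 3) (Fin 3) (LaurentPolynomial ℤ)) = M₂)
    (h₃ : (ψ (σ 2) : Matrix (Fin 3) (Fin 3) (LaurentPolynomial ℤ)) = M₃)
    (hker : ψ.ker ≤ Subgroup.closure ({α, β} : Set B₄)) :
    Function.Injective ψ ↔
      ∀ (m : ℤ) (l : List ℕ), (∀ i ∈ l, i = 1 ∨ i = 2 ∨ i = 3) →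
        θ ^ m * τ ^ 2 * (l.map fun i => Δ * τ ^ i).prod * Δ * τ ^ 2 ≠ 1 →
        (T (4 * m) : LaurentPolynomial ℤ) •
            ((ψ τ : Matrix (Fin 3) (Fin 3) (LaurentPolynomial ℤ)) ^ 2 *
              (l.map fun i =>
                (ψ Δ : Matrix (Fin 3) (Fin 3) (LaurentPolynomial ℤ)) *
                  (ψ τ : Matrix (Fin 3) (Fin 3) (LaurentPolynomial ℤ)) ^ i).prod *
              (ψ Δ : Matrix (Fin 3) (Fin 3) (LaurentPolynomial ℤ)) *
              (ψ τ : Matrix (Fin 3) (Fin 3) (LaurentPolynomial ℤ)) ^ 2)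
          ≠ (1 : Matrix (Fin 3) (Fin 3) (LaurentPolynomial ℤ)) := by
  have hτ : (ψ τ : 𝕄) = burauTau := by
    rw [τ, map_mul, map_mul, Units.val_mul, Units.val_mul, h₁, h₂, h₃, M₁_mul_M₂_mul_M₃]
  have hθ : (ψ θ : 𝕄) = (T 4 : LaurentPolynomial ℤ) • 1 := by
    rw [θ, map_pow, Units.val_pow_eq_pow_val, hτ, burauTau_pow_four]
  have hword (m : ℤ) (l : List ℕ) : (ψ (θ ^ m * τ ^ 2 * dtWord τ Δ l * Δ * τ ^ 2) : 𝕄) =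
      (T (4 * m) : LaurentPolynomial ℤ) • ((ψ τ : 𝕄) ^ 2 *
        (l.map fun i => (ψ Δ : 𝕄) * (ψ τ : 𝕄) ^ i).prod * (ψ Δ : 𝕄) * (ψ τ : 𝕄) ^ 2) := by
    have hl := ((Units.coeHom _).comp ψ).map_dtWord (t := τ) (d := Δ) l
    simp only [MonoidHom.comp_apply, Units.coeHom_apply] at hl
    simp only [map_mul, map_zpow, map_pow, Units.val_mul, Units.val_pow_eq_pow_val, hl,
      Matrix.GeneralLinearGroup.val_zpow_eq_T_smul hθ, smul_mul_assoc, one_mul]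
  constructor
  · intro hinj m l _ hne hmat
    refine hne (hinj (Units.ext ?_))
    rw [map_one, Units.val_one, ← hmat]
    exact hword m l
  · intro hcond
    refine (injective_iff_map_eq_one ψ).2 fun g hg => ?_
    obtain ⟨n, rfl⟩ | ⟨m, L, hL, hconj⟩ :=
      (hasNormalForm_of_mem_closure Δ_sq (closure_α_β_le (hker hg))).exists_eq_zpow_or_isConj
        Δ_sq
    · rw [map_zpow, zpow_eq_one_iff_of_val_eq_burauTau hτ] at hg
      rw [hg, zpow_zero]
    · rw [← θ] at hconj
      by_contra hne
      have hw := isConj_one_right.1 (hg ▸ ψ.map_isConj hconj)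
      refine hcond m L hL (fun h => hne (isConj_one_left.1 (h ▸ hconj))) ?_
      rw [← hword, hw, Units.val_one]
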